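/- Let X ~ NegBin(k, 1/2), Y with (Y | X) ~ NegBin(max(X−1,0), 1/2), and Z ~ Geom(1/2) (on ℕ) independent of (X, Y). Then E[(Y − Z)·1_{Z>0}] = (k − 3 + 2^{−k})/2 and E[(Y − Z − k)²·1_{Z>0}] < 4k + 9. -/
import Mathlib


/-- The negative binomial pmf `NegBin(k, 1/2)`: probability that there are `m`
failures before the `k`-th success in fair coin flips,
`P[X = m] = C(m+k-1, m)·2^{-(m+k)}`. -/
noncomputable def negbin (k m : ℕ) : ℝ := (Nat.choose (m + k - 1) m : ℝ) / 2 ^ (m + k)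
/-- The geometric pmf `Geom(1/2)` on ℕ: `P[Z = z] = 2^{-(z+1)}`. -/
noncomputable def geomHalf (z : ℕ) : ℝ := (1 / 2 : ℝ) ^ (z + 1)
lemma half_norm : ‖(1/2 : ℝ)‖ < 1 := by rw [Real.norm_eq_abs]; rw [abs_of_pos] <;> norm_num
lemma sumA (n : ℕ) : Summable (fun j : ℕ => ((j + n).choose n : ℝ) * (1/2) ^ j) :=
  summable_choose_mul_geometric_of_norm_lt_one n half_norm
lemma tsumA (n : ℕ) : ∑' j : ℕ, ((j + n).choose n : ℝ) * (1/2) ^ j = 2 ^ (n + 1) := by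
  rw [tsum_choose_mul_geometric_of_norm_lt_one n half_norm]
  rw [show (1 - 1/2 : ℝ) = 2⁻¹ by norm_num, inv_pow, one_div, inv_inv]
lemma negbin_def' (n m : ℕ) : negbin n m = ((m + n - 1).choose m : ℝ) * (1/2) ^ (m + n) := by
  rw [negbin, one_div, inv_pow, div_eq_mul_inv]
lemma negbin_succ_eq (s m : ℕ) :
    negbin (s+1) m = (1/2) ^ (s+1) * (((m + s).choose s : ℝ) * (1/2) ^ m) := by
  rw [negbin_def', show m + (s+1) - 1 = m + s by omega,
    show (m+s).choose m = (m+s).choose s by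
      rw [← Nat.choose_symm (Nat.le_add_right m s), Nat.add_sub_cancel_left],
    pow_add]
  ring

lemma negbin_zero : negbin = fun n m => negbin n m := rfl

lemma negbin_zero_succ (m : ℕ) : negbin 0 (m+1) = 0 := by
  rw [negbin_def', show m + 1 + 0 - 1 = m by omega,
    Nat.choose_eq_zero_of_lt (Nat.lt_succ_self m)]
  simp

lemma negbin_zero_eq : (fun m => negbin 0 m) = fun m => if m = 0 then (1:ℝ) else 0 := by
  funext m
  cases m with
  | zero => simp [negbin]
  | succ j => simp [negbin_zero_succ]

lemma Sp (n : ℕ) : Summable (fun m => negbin n m) := by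
  cases n with
  | zero => rw [negbin_zero_eq]; exact (hasSum_ite_eq 0 (1:ℝ)).summable
  | succ s =>
    have : (fun m => negbin (s+1) m)
        = fun m => (1/2:ℝ)^(s+1) * (((m + s).choose s : ℝ) * (1/2) ^ m) :=
      funext fun m => negbin_succ_eq s m
    rw [this]; exact (sumA s).mul_left _

lemma Tp (n : ℕ) : ∑' m, negbin n m = 1 := by
  cases n with
  | zero => rw [negbin_zero_eq]; exact (hasSum_ite_eq 0 (1:ℝ)).tsum_eq
  | succ s =>
    have : (fun m => negbin (s+1) m)
        = fun m => (1/2:ℝ)^(s+1) * (((m + s).choose s : ℝ) * (1/2) ^ m) :=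
      funext fun m => negbin_succ_eq s m
    rw [this, tsum_mul_left, tsumA]
    rw [one_div, inv_pow, inv_mul_cancel₀ (by positivity)]

lemma negbin_mul_shift (n j : ℕ) :
    negbin (n+1) (j+1) * ((j:ℝ)+1) = ((n:ℝ)+1) * negbin (n+2) j := by
  rw [negbin_def', negbin_def', show j + 1 + (n+1) - 1 = j + n + 1 by omega,
    show j + (n+2) - 1 = j + n + 1 by omega,
    show j + 1 + (n+1) = j + n + 2 by omega, show j + (n+2) = j + n + 2 by omega]
  have h := Nat.choose_succ_right_eq (j + n + 1) j
  rw [show j + n + 1 - j = n + 1 by omega] at h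
  have h' : ((j+n+1).choose (j+1) : ℝ) * ((j:ℝ)+1) = ((j+n+1).choose j : ℝ) * ((n:ℝ)+1) := by
    exact_mod_cast congrArg (Nat.cast : ℕ → ℝ) h
  calc ((j+n+1).choose (j+1) : ℝ) * (1/2)^(j+n+2) * ((j:ℝ)+1)
      = ((j+n+1).choose (j+1) : ℝ) * ((j:ℝ)+1) * (1/2)^(j+n+2) := by ring
    _ = ((j+n+1).choose j : ℝ) * ((n:ℝ)+1) * (1/2)^(j+n+2) := by rw [h']
    _ = ((n:ℝ)+1) * (((j+n+1).choose j : ℝ) * (1/2)^(j+n+2)) := by ring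

lemma mom1_zero : (fun m => negbin 0 m * (m:ℝ)) = fun _ => (0:ℝ) := by
  funext m
  cases m with
  | zero => simp
  | succ j => simp [negbin_zero_succ]

lemma shift1 (s : ℕ) :
    (fun j => negbin (s+1) (j+1) * ((j+1 : ℕ) : ℝ))
      = fun j => ((s:ℝ)+1) * negbin (s+2) j := by
  funext j
  push_cast
  exact negbin_mul_shift s j

lemma Sm1 (n : ℕ) : Summable (fun m => negbin n m * (m:ℝ)) := by
  cases n with
  | zero => rw [mom1_zero]; exact summable_zero
  | succ s =>
    apply (summable_nat_add_iff 1).mp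
    show Summable fun j => negbin (s+1) (j+1) * ((j+1 : ℕ) : ℝ)
    rw [shift1]
    exact (Sp (s+2)).mul_left _

lemma Tm1 (n : ℕ) : ∑' m, negbin n m * (m:ℝ) = n := by
  cases n with
  | zero => rw [mom1_zero]; simp
  | succ s =>
    rw [Summable.tsum_eq_zero_add (Sm1 (s+1))]
    have h0 : negbin (s+1) 0 * ((0:ℕ):ℝ) = 0 := by simp
    rw [h0, zero_add]
    have : (fun j => negbin (s+1) (j+1) * ((j+1 : ℕ) : ℝ))
        = fun j => ((s:ℝ)+1) * negbin (s+2) j := shift1 s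
    rw [show (fun j => negbin (s+1) (j+1) * (((j:ℕ)+1 : ℕ) : ℝ)) = fun j => negbin (s+1) (j+1) * ((j+1 : ℕ) : ℝ) from rfl]
    calc ∑' j, negbin (s+1) (j+1) * ((j+1 : ℕ) : ℝ)
        = ∑' j, ((s:ℝ)+1) * negbin (s+2) j := by rw [this]
      _ = ((s:ℝ)+1) * ∑' j, negbin (s+2) j := tsum_mul_left
      _ = ((s+1 : ℕ) : ℝ) := by rw [Tp]; push_cast; ring

lemma momF_zero : (fun m => negbin 0 m * (m:ℝ) * ((m:ℝ)-1)) = fun _ => (0:ℝ) := by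
  funext m
  cases m with
  | zero => simp
  | succ j => simp [negbin_zero_succ]

lemma shiftF (s : ℕ) :
    (fun j => negbin (s+1) (j+1) * ((j+1 : ℕ) : ℝ) * (((j+1 : ℕ) : ℝ) - 1))
      = fun j => ((s:ℝ)+1) * (negbin (s+2) j * (j:ℝ)) := by
  funext j
  have := negbin_mul_shift s j
  push_cast
  push_cast at this
  calc negbin (s+1) (j+1) * ((j:ℝ)+1) * ((j:ℝ)+1-1)
      = negbin (s+1) (j+1) * ((j:ℝ)+1) * (j:ℝ) := by ring
    _ = ((s:ℝ)+1) * negbin (s+2) j * (j:ℝ) := by rw [this]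
    _ = ((s:ℝ)+1) * (negbin (s+2) j * (j:ℝ)) := by ring

lemma SmF (n : ℕ) : Summable (fun m => negbin n m * (m:ℝ) * ((m:ℝ)-1)) := by
  cases n with
  | zero => rw [momF_zero]; exact summable_zero
  | succ s =>
    apply (summable_nat_add_iff 1).mp
    show Summable fun j => negbin (s+1) (j+1) * ((j+1 : ℕ) : ℝ) * (((j+1 : ℕ) : ℝ) - 1)
    rw [shiftF]
    exact ((Sm1 (s+2)).mul_left _)

lemma TmF (n : ℕ) : ∑' m, negbin n m * (m:ℝ) * ((m:ℝ)-1) = n * (n+1) := by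
  cases n with
  | zero => rw [momF_zero]; simp
  | succ s =>
    rw [Summable.tsum_eq_zero_add (SmF (s+1))]
    have h0 : negbin (s+1) 0 * ((0:ℕ):ℝ) * (((0:ℕ):ℝ)-1) = 0 := by simp
    rw [h0, zero_add]
    calc ∑' j, negbin (s+1) (j+1) * ((j+1 : ℕ) : ℝ) * (((j+1 : ℕ) : ℝ) - 1)
        = ∑' j, ((s:ℝ)+1) * (negbin (s+2) j * (j:ℝ)) := by rw [shiftF]
      _ = ((s:ℝ)+1) * ∑' j, negbin (s+2) j * (j:ℝ) := tsum_mul_left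
      _ = ((s+1 : ℕ) : ℝ) * (((s+1 : ℕ) : ℝ) + 1) := by rw [Tm1]; push_cast; ring

lemma geom_eq : geomHalf = negbin 1 := by
  funext z
  rw [geomHalf, negbin_def', show z + 1 - 1 = z by omega, Nat.choose_self]
  simp

lemma comb3_summable {f g h : ℕ → ℝ} (a b c : ℝ)
    (hf : Summable f) (hg : Summable g) (hh : Summable h) :
    Summable (fun n => a * f n + b * g n + c * h n) :=
  ((hf.mul_left a).add (hg.mul_left b)).add (hh.mul_left c)

lemma comb3_tsum {f g h : ℕ → ℝ} (a b c : ℝ)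
    (hf : Summable f) (hg : Summable g) (hh : Summable h) :
    ∑' n, (a * f n + b * g n + c * h n)
      = a * ∑' n, f n + b * ∑' n, g n + c * ∑' n, h n := by
  rw [Summable.tsum_add ((hf.mul_left a).add (hg.mul_left b)) (hh.mul_left c),
    Summable.tsum_add (hf.mul_left a) (hg.mul_left b), tsum_mul_left, tsum_mul_left, tsum_mul_left]

lemma comb4_tsum {f g h e : ℕ → ℝ} (a b c d : ℝ)
    (hf : Summable f) (hg : Summable g) (hh : Summable h) (he : Summable e) :
    ∑' n, (a * f n + b * g n + c * h n + d * e n)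
      = a * ∑' n, f n + b * ∑' n, g n + c * ∑' n, h n + d * ∑' n, e n := by
  rw [Summable.tsum_add (comb3_summable a b c hf hg hh) (he.mul_left d), comb3_tsum a b c hf hg hh,
    tsum_mul_left]

lemma Sg : Summable geomHalf := by rw [geom_eq]; exact Sp 1
lemma Sg1 : Summable (fun z => geomHalf z * (z:ℝ)) := by rw [geom_eq]; exact Sm1 1
lemma SgF : Summable (fun z => geomHalf z * (z:ℝ) * ((z:ℝ)-1)) := by rw [geom_eq]; exact SmF 1
lemma Tg : ∑' z, geomHalf z = 1 := by rw [geom_eq]; exact Tp 1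
lemma Tg1 : ∑' z, geomHalf z * (z:ℝ) = 1 := by rw [geom_eq, Tm1]; norm_num
lemma TgF : ∑' z, geomHalf z * (z:ℝ) * ((z:ℝ)-1) = 2 := by rw [geom_eq, TmF]; norm_num

lemma geom_succ (z : ℕ) : geomHalf (z+1) = 1/2 * geomHalf z := by
  rw [geomHalf, geomHalf, pow_succ]; ring

lemma zshift1 (c : ℝ) :
    (fun z => geomHalf (z+1) * (if 0 < z + 1 then c - ((z+1:ℕ):ℝ) else 0))
      = fun z => (c-1)/2 * geomHalf z + (-1/2) * (geomHalf z * (z:ℝ)) + 0 * geomHalf z := by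
  funext z
  rw [if_pos (Nat.succ_pos z), geom_succ]
  push_cast
  ring

lemma zS1 (c : ℝ) : Summable (fun z : ℕ => geomHalf z * (if 0 < z then c - (z:ℝ) else 0)) := by
  apply (summable_nat_add_iff 1).mp
  show Summable fun z => geomHalf (z+1) * (if 0 < z + 1 then c - ((z+1:ℕ):ℝ) else 0)
  rw [zshift1]
  exact comb3_summable _ _ _ Sg Sg1 Sg
lemma zT1 (c : ℝ) :
    ∑' z : ℕ, geomHalf z * (if 0 < z then c - (z:ℝ) else 0) = c/2 - 1 := by
  rw [Summable.tsum_eq_zero_add (zS1 c)]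
  have h0 : geomHalf 0 * (if 0 < 0 then c - ((0:ℕ):ℝ) else 0) = 0 := by simp
  rw [h0, zero_add]
  calc ∑' z, geomHalf (z+1) * (if 0 < z + 1 then c - ((z+1:ℕ):ℝ) else 0)
      = ∑' z, ((c-1)/2 * geomHalf z + (-1/2) * (geomHalf z * (z:ℝ)) + 0 * geomHalf z) := by
        rw [zshift1]
    _ = (c-1)/2 * ∑' z, geomHalf z + (-1/2) * ∑' z, geomHalf z * (z:ℝ) + 0 * ∑' z, geomHalf z :=
        comb3_tsum _ _ _ Sg Sg1 Sg
    _ = c/2 - 1 := by rw [Tg, Tg1]; ring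

lemma zshift2 (c b : ℝ) :
    (fun z => geomHalf (z+1) * (if 0 < z + 1 then (c - ((z+1:ℕ):ℝ) - b)^2 else 0))
      = fun z => (c-b-1)^2/2 * geomHalf z + (3-2*(c-b))/2 * (geomHalf z * (z:ℝ))
          + 1/2 * (geomHalf z * (z:ℝ) * ((z:ℝ)-1)) := by
  funext z
  rw [if_pos (Nat.succ_pos z), geom_succ]
  push_cast
  ring

lemma zS2 (c b : ℝ) :
    Summable (fun z : ℕ => geomHalf z * (if 0 < z then (c - (z:ℝ) - b)^2 else 0)) := by
  apply (summable_nat_add_iff 1).mp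
  show Summable fun z => geomHalf (z+1) * (if 0 < z + 1 then (c - ((z+1:ℕ):ℝ) - b)^2 else 0)
  rw [zshift2]
  exact comb3_summable _ _ _ Sg Sg1 SgF
lemma zT2 (c b : ℝ) :
    ∑' z : ℕ, geomHalf z * (if 0 < z then (c - (z:ℝ) - b)^2 else 0)
      = (c-b)^2/2 - 2*(c-b) + 3 := by
  rw [Summable.tsum_eq_zero_add (zS2 c b)]
  have h0 : geomHalf 0 * (if 0 < 0 then (c - ((0:ℕ):ℝ) - b)^2 else 0) = 0 := by simp
  rw [h0, zero_add]
  calc ∑' z, geomHalf (z+1) * (if 0 < z + 1 then (c - ((z+1:ℕ):ℝ) - b)^2 else 0)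
      = ∑' z, ((c-b-1)^2/2 * geomHalf z + (3-2*(c-b))/2 * (geomHalf z * (z:ℝ))
          + 1/2 * (geomHalf z * (z:ℝ) * ((z:ℝ)-1))) := by rw [zshift2]
    _ = (c-b-1)^2/2 * ∑' z, geomHalf z + (3-2*(c-b))/2 * ∑' z, geomHalf z * (z:ℝ)
          + 1/2 * ∑' z, geomHalf z * (z:ℝ) * ((z:ℝ)-1) := comb3_tsum _ _ _ Sg Sg1 SgF
    _ = (c-b)^2/2 - 2*(c-b) + 3 := by rw [Tg, Tg1, TgF]; ring

lemma ysum1 (s : ℕ) : ∑' y, negbin s y * ((y:ℝ)/2 - 1) = (s:ℝ)/2 - 1 := by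
  have e : (fun y => negbin s y * ((y:ℝ)/2 - 1))
      = fun y => 1/2 * (negbin s y * (y:ℝ)) + (-1) * negbin s y + 0 * negbin s y :=
    funext fun y => by ring
  rw [e, comb3_tsum _ _ _ (Sm1 s) (Sp s) (Sp s), Tm1, Tp]
  ring

lemma ysum2 (s : ℕ) (c : ℝ) :
    ∑' y, negbin s y * (((y:ℝ) - c)^2/2 - 2*((y:ℝ) - c) + 3)
      = (s:ℝ)^2/2 - (c+1)*(s:ℝ) + (c^2/2 + 2*c + 3) := by
  have e : (fun y => negbin s y * (((y:ℝ) - c)^2/2 - 2*((y:ℝ) - c) + 3))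
      = fun y => 1/2 * (negbin s y * (y:ℝ) * ((y:ℝ)-1)) + (-c-3/2) * (negbin s y * (y:ℝ))
          + (c^2/2 + 2*c + 3) * negbin s y :=
    funext fun y => by ring
  rw [e, comb3_tsum _ _ _ (SmF s) (Sm1 s) (Sp s), TmF, Tm1, Tp]
  ring

lemma dfun_eq (k : ℕ) : (fun x => negbin k x * (if x = 0 then (1:ℝ) else 0))
    = fun x => if x = 0 then negbin k 0 else 0 := by
  funext x
  cases x with
  | zero => simp
  | succ n => simp

lemma Sd (k : ℕ) : Summable (fun x => negbin k x * (if x = 0 then (1:ℝ) else 0)) := by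
  rw [dfun_eq]; exact (hasSum_ite_eq 0 (negbin k 0)).summable

lemma negbin_at_zero (k : ℕ) : negbin k 0 = (1/2:ℝ)^k := by
  rw [negbin_def', zero_add]
  rcases k with _ | n
  · simp
  · rw [show n + 1 - 1 = n by omega, Nat.choose_zero_right]; simp

lemma Td (k : ℕ) : ∑' x, negbin k x * (if x = 0 then (1:ℝ) else 0) = (1/2:ℝ)^k := by
  rw [dfun_eq, (hasSum_ite_eq 0 (negbin k 0)).tsum_eq, negbin_at_zero]

lemma xsum1 (k : ℕ) :
    ∑' x, negbin k x * (((x - 1 : ℕ):ℝ)/2 - 1) = ((k:ℝ) - 3 + (1/2)^k)/2 := by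
  have e : (fun x => negbin k x * (((x - 1 : ℕ):ℝ)/2 - 1))
      = fun x => 1/2 * (negbin k x * (x:ℝ)) + 1/2 * (negbin k x * (if x = 0 then (1:ℝ) else 0))
          + (-3/2) * negbin k x := by
    funext x
    cases x with
    | zero => simp; ring
    | succ n => push_cast [show n + 1 - 1 = n by omega]; simp; ring
  rw [e, comb3_tsum _ _ _ (Sm1 k) (Sd k) (Sp k), Tm1, Td, Tp]
  ring

lemma xsum2 (k : ℕ) :
    ∑' x, negbin k x * (((x - 1 : ℕ):ℝ)^2/2 - ((k:ℝ)+1)*((x - 1 : ℕ):ℝ)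
        + ((k:ℝ)^2/2 + 2*(k:ℝ) + 3))
      = 2*(k:ℝ) + 9/2 - ((k:ℝ)+3/2) * (1/2)^k := by
  have e : (fun x => negbin k x * (((x - 1 : ℕ):ℝ)^2/2 - ((k:ℝ)+1)*((x - 1 : ℕ):ℝ)
        + ((k:ℝ)^2/2 + 2*(k:ℝ) + 3)))
      = fun x => 1/2 * (negbin k x * (x:ℝ) * ((x:ℝ)-1))
          + (-(k:ℝ)-3/2) * (negbin k x * (x:ℝ))
          + ((k:ℝ)^2/2 + 3*(k:ℝ) + 9/2) * negbin k x
          + (-(k:ℝ)-3/2) * (negbin k x * (if x = 0 then (1:ℝ) else 0)) := by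
    funext x
    cases x with
    | zero => simp; ring
    | succ n => push_cast [show n + 1 - 1 = n by omega]; simp; ring
  rw [e, comb4_tsum _ _ _ _ (SmF k) (Sm1 k) (Sp k) (Sd k), TmF, Tm1, Tp, Td]
  ring


/-- with `X ~ NegBin(k,1/2)`, `(Y | X) ~ NegBin(max(X-1,0),1/2)`, and
`Z ~ Geom(1/2)` independent of `(X,Y)` (joint pmf `negbin k x · negbin (x-1) y · geomHalf z`),
`E[(Y - Z)·1_{Z>0}] = (k - 3 + 2^{-k})/2` and `E[(Y - Z - k)²·1_{Z>0}] < 4k + 9`. -/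
theorem negbin_geom_claim (k : ℕ) :
    (∑' x : ℕ, ∑' y : ℕ, ∑' z : ℕ,
        negbin k x * negbin (x - 1) y * geomHalf z *
          (if 0 < z then (y : ℝ) - z else 0))
      = ((k : ℝ) - 3 + (1 / 2) ^ k) / 2 ∧
    (∑' x : ℕ, ∑' y : ℕ, ∑' z : ℕ,
        negbin k x * negbin (x - 1) y * geomHalf z *
          (if 0 < z then ((y : ℝ) - z - k) ^ 2 else 0))
      < 4 * (k : ℝ) + 9 := by
  constructor
  · calc (∑' x : ℕ, ∑' y : ℕ, ∑' z : ℕ,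
        negbin k x * negbin (x - 1) y * geomHalf z *
          (if 0 < z then (y : ℝ) - z else 0))
        = ∑' x : ℕ, ∑' y : ℕ, negbin k x * negbin (x-1) y * ((y:ℝ)/2 - 1) :=
          tsum_congr fun x => tsum_congr fun y => by
            calc (∑' z : ℕ, negbin k x * negbin (x - 1) y * geomHalf z *
                  (if 0 < z then (y : ℝ) - z else 0))
                = ∑' z : ℕ, (negbin k x * negbin (x - 1) y) *
                    (geomHalf z * (if 0 < z then (y : ℝ) - (z:ℝ) else 0)) :=
                  tsum_congr fun z => by ring
              _ = (negbin k x * negbin (x - 1) y) *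
                    ∑' z : ℕ, geomHalf z * (if 0 < z then (y : ℝ) - (z:ℝ) else 0) :=
                  tsum_mul_left
              _ = negbin k x * negbin (x-1) y * ((y:ℝ)/2 - 1) := by
                  rw [zT1]
      _ = ∑' x : ℕ, negbin k x * (((x - 1 : ℕ):ℝ)/2 - 1) :=
          tsum_congr fun x => by
            calc (∑' y : ℕ, negbin k x * negbin (x-1) y * ((y:ℝ)/2 - 1))
                = ∑' y : ℕ, negbin k x * (negbin (x-1) y * ((y:ℝ)/2 - 1)) :=
                  tsum_congr fun y => by ring
              _ = negbin k x * ∑' y : ℕ, negbin (x-1) y * ((y:ℝ)/2 - 1) := tsum_mul_left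
              _ = negbin k x * (((x - 1 : ℕ):ℝ)/2 - 1) := by rw [ysum1]
      _ = ((k : ℝ) - 3 + (1 / 2) ^ k) / 2 := xsum1 k
  · have key : (∑' x : ℕ, ∑' y : ℕ, ∑' z : ℕ,
        negbin k x * negbin (x - 1) y * geomHalf z *
          (if 0 < z then ((y : ℝ) - z - k) ^ 2 else 0))
        = 2*(k:ℝ) + 9/2 - ((k:ℝ)+3/2) * (1/2)^k := by
      calc (∑' x : ℕ, ∑' y : ℕ, ∑' z : ℕ,
          negbin k x * negbin (x - 1) y * geomHalf z *
            (if 0 < z then ((y : ℝ) - z - k) ^ 2 else 0))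
          = ∑' x : ℕ, ∑' y : ℕ, negbin k x * negbin (x-1) y *
              (((y:ℝ) - (k:ℝ))^2/2 - 2*((y:ℝ) - (k:ℝ)) + 3) :=
            tsum_congr fun x => tsum_congr fun y => by
              calc (∑' z : ℕ, negbin k x * negbin (x - 1) y * geomHalf z *
                    (if 0 < z then ((y : ℝ) - z - k) ^ 2 else 0))
                  = ∑' z : ℕ, (negbin k x * negbin (x - 1) y) *
                      (geomHalf z * (if 0 < z then ((y : ℝ) - (z:ℝ) - (k:ℝ)) ^ 2 else 0)) :=
                    tsum_congr fun z => by ring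
                _ = (negbin k x * negbin (x - 1) y) *
                      ∑' z : ℕ, geomHalf z * (if 0 < z then ((y : ℝ) - (z:ℝ) - (k:ℝ)) ^ 2 else 0) :=
                    tsum_mul_left
                _ = negbin k x * negbin (x-1) y *
                      (((y:ℝ) - (k:ℝ))^2/2 - 2*((y:ℝ) - (k:ℝ)) + 3) := by
                    rw [zT2]
        _ = ∑' x : ℕ, negbin k x * (((x - 1 : ℕ):ℝ)^2/2 - ((k:ℝ)+1)*((x - 1 : ℕ):ℝ)
              + ((k:ℝ)^2/2 + 2*(k:ℝ) + 3)) :=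
            tsum_congr fun x => by
              calc (∑' y : ℕ, negbin k x * negbin (x-1) y *
                    (((y:ℝ) - (k:ℝ))^2/2 - 2*((y:ℝ) - (k:ℝ)) + 3))
                  = ∑' y : ℕ, negbin k x * (negbin (x-1) y *
                      (((y:ℝ) - (k:ℝ))^2/2 - 2*((y:ℝ) - (k:ℝ)) + 3)) :=
                    tsum_congr fun y => by ring
                _ = negbin k x * ∑' y : ℕ, negbin (x-1) y *
                      (((y:ℝ) - (k:ℝ))^2/2 - 2*((y:ℝ) - (k:ℝ)) + 3) := tsum_mul_left
                _ = negbin k x * (((x - 1 : ℕ):ℝ)^2/2 - ((k:ℝ)+1)*((x - 1 : ℕ):ℝ)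
                      + ((k:ℝ)^2/2 + 2*(k:ℝ) + 3)) := by rw [ysum2]
        _ = 2*(k:ℝ) + 9/2 - ((k:ℝ)+3/2) * (1/2)^k := xsum2 k
    rw [key]
    have h1 : (0:ℝ) < (1/2)^k := by positivity
    have h2 : (0:ℝ) ≤ (k:ℝ) := Nat.cast_nonneg k
    nlinarith
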